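/- arXiv:0902.0912 — 3 statements merged into one kernel-verified Lean document; each statement's English description precedes it below -/
import Mathlib

section
/- Conversely, if there exists an isometry U : A'B' → CD with (1_{AB} ⊗ U) ρ_{ABA'B'} (1_{AB} ⊗ U)† = ψ_{ABC} ⊗ ρ_D for a pure state ψ_{ABC}, then for any purification ψ_{RABA'B'} of ρ_{ABA'B'} the reduced state on ABR is product: ρ_{ABR} = ρ_{AB} ⊗ ρ_R. -/
/-!
Let `ψ' = (1 ⊗ U ⊗ 1) ψ` on `AB ⊗ C ⊗ D ⊗ R`. Its marginal on `AB ⊗ C` is the `D`-marginal of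
`(1 ⊗ U) ρ (1 ⊗ U)† = φφ† ⊗ ρ_D`, i.e. the pure state `φφ†`, and a vector with a pure marginal
factorizes: `ψ' = φ ⊗ χ`. As `U` is an isometry, tracing `CD` out of `ψ'` gives the same state
on `AB ⊗ R` as tracing `A'B'` out of `ψ`, namely `Tr_C φφ† ⊗ Tr_D χχ†`; a unit-trace product
matrix is the product of its two marginals.
-/

open Classical Matrix Kronecker ComplexOrder
noncomputable section

/-- von Neumann entropy (in nats) of a matrix, via its eigenvalues if Hermitian. -/
def vN {n : Type*} [Fintype n] [DecidableEq n] (ρ : Matrix n n ℂ) : ℝ :=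
  if h : ρ.IsHermitian then ∑ i, Real.negMulLog (h.eigenvalues i) else 0

/-- A density matrix: positive semidefinite with unit trace. -/
def IsDensity {n : Type*} [Fintype n] (ρ : Matrix n n ℂ) : Prop :=
  ρ.PosSemidef ∧ ρ.trace = 1

/-- Partial trace over the second tensor factor. -/
def ptrR {A B : Type*} [Fintype B] (ρ : Matrix (A × B) (A × B) ℂ) : Matrix A A ℂ :=
  fun i j => ∑ k, ρ (i, k) (j, k)

/-- Partial trace over the first tensor factor. -/
def ptrL {A B : Type*} [Fintype A] (ρ : Matrix (A × B) (A × B) ℂ) : Matrix B B ℂ :=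
  fun i j => ∑ k, ρ (k, i) (k, j)

/-- Rank-one projection onto the (unnormalized) vector ψ. -/
def pureProj {n : Type*} (ψ : n → ℂ) : Matrix n n ℂ := fun i j => ψ i * star (ψ j)

/-- Partial trace over the middle system of a tripartite state on (A ⊗ B) ⊗ C. -/
def ptrMid {A B C : Type*} [Fintype B] (M : Matrix ((A × B) × C) ((A × B) × C) ℂ) :
    Matrix (A × C) (A × C) ℂ :=
  fun p q => ∑ b, M ((p.1, b), p.2) ((q.1, b), q.2)

section PartialTrace

variable {A B : Type*}

theorem ptrR_kronecker [Fintype B] (X : Matrix A A ℂ) (Y : Matrix B B ℂ) :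
    ptrR (X ⊗ₖ Y) = Y.trace • X := by
  ext i j
  simp [ptrR, Matrix.trace, Finset.mul_sum, mul_comm]

theorem ptrL_kronecker [Fintype A] (X : Matrix A A ℂ) (Y : Matrix B B ℂ) :
    ptrL (X ⊗ₖ Y) = X.trace • Y := by
  ext i j
  simp [ptrL, Matrix.trace, Finset.sum_mul]

theorem trace_ptrR [Fintype A] [Fintype B] (M : Matrix (A × B) (A × B) ℂ) :
    (ptrR M).trace = M.trace := by
  simp [ptrR, Matrix.trace, Fintype.sum_prod_type]

theorem trace_ptrMid {C : Type*} [Fintype A] [Fintype B] [Fintype C]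
    (M : Matrix ((A × B) × C) ((A × B) × C) ℂ) : (ptrMid M).trace = M.trace := by
  simp only [Matrix.trace, diag_apply, ptrMid, Fintype.sum_prod_type]
  exact Finset.sum_congr rfl fun _ _ => Finset.sum_comm

theorem eq_ptrR_kronecker_ptrL_of_eq_kronecker [Fintype A] [Fintype B]
    {M : Matrix (A × B) (A × B) ℂ} {X : Matrix A A ℂ} {Y : Matrix B B ℂ}
    (hM : M = X ⊗ₖ Y) (htr : M.trace = 1) : M = ptrR M ⊗ₖ ptrL M := by
  rw [hM, trace_kronecker] at *
  rw [ptrR_kronecker, ptrL_kronecker, smul_kronecker, kronecker_smul, smul_smul, mul_comm, htr,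
    one_smul]

end PartialTrace

theorem star_dotProduct_self_eq_one_of_sum_norm_sq {n : Type*} [Fintype n] {φ : n → ℂ}
    (hφ : ∑ i, ‖φ i‖ ^ 2 = 1) : star φ ⬝ᵥ φ = 1 := by
  simp only [dotProduct, Pi.star_apply, RCLike.star_def, Complex.conj_mul']
  exact_mod_cast hφ

theorem mulVec_dotProduct_star_mulVec {m n : Type*} [Fintype m] [Fintype n] [DecidableEq n]
    {U : Matrix m n ℂ} (hU : Uᴴ * U = 1) (u v : n → ℂ) :
    (U *ᵥ u) ⬝ᵥ star (U *ᵥ v) = u ⬝ᵥ star v := by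
  rw [star_mulVec, dotProduct_comm, ← dotProduct_mulVec, mulVec_mulVec, hU, one_mulVec,
    dotProduct_comm]

theorem ptrR_pureProj_eq_mul_conjTranspose {X Y : Type*} [Fintype Y] (ψ : X × Y → ℂ) :
    ptrR (pureProj ψ) = Matrix.of (Function.curry ψ) * (Matrix.of (Function.curry ψ))ᴴ := by
  ext i j
  simp [ptrR, pureProj, mul_apply]

theorem eq_mul_of_ptrR_pureProj_eq {X Y : Type*} [Fintype X] [Fintype Y] [DecidableEq X]
    {ψ : X × Y → ℂ} {φ : X → ℂ} (hφ : star φ ⬝ᵥ φ = 1) (h : ptrR (pureProj ψ) = pureProj φ)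
    (x : X) (y : Y) : ψ (x, y) = φ x * ∑ x', star (φ x') * ψ (x', y) := by
  set Ψ := Matrix.of (Function.curry ψ)
  set P : Matrix X X ℂ := vecMulVec φ (star φ)
  have hP : P * P = P := by rw [vecMulVec_mul_vecMulVec, hφ, one_smul]
  -- `(1 - P) * Ψ` has Gram matrix `(1 - P) * P * (1 - P) = 0`, so `Ψ = P * Ψ`.
  have hPΨ : (Ψ - P * Ψ) * (Ψ - P * Ψ)ᴴ = 0 := by
    have hΨ : Ψ * Ψᴴ = P := (ptrR_pureProj_eq_mul_conjTranspose ψ).symm.trans h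
    have hPh : Pᴴ = P := by simp [P, conjTranspose_vecMulVec]
    have hQ : Ψ - P * Ψ = (1 - P) * Ψ := by rw [Matrix.sub_mul, Matrix.one_mul]
    rw [hQ, conjTranspose_mul, Matrix.mul_assoc, ← Matrix.mul_assoc Ψ, hΨ, conjTranspose_sub,
      conjTranspose_one, hPh, ← Matrix.mul_assoc, Matrix.sub_mul, Matrix.one_mul, hP, sub_self,
      Matrix.zero_mul]
  have hxy := congrFun (congrFun (self_mul_conjTranspose_eq_zero.mp hPΨ) x) y
  rw [Matrix.sub_apply, Matrix.zero_apply, sub_eq_zero] at hxy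
  change Ψ x y = _
  rw [hxy]
  simp [P, Ψ, mul_apply, vecMulVec_apply, Finset.mul_sum, mul_assoc]

section MulVecMid

variable {A B B' C : Type*} [Fintype B]

def mulVecMid (U : Matrix B' B ℂ) (ψ : (A × B) × C → ℂ) : (A × B') × C → ℂ :=
  fun x => (U *ᵥ fun b => ψ ((x.1.1, b), x.2)) x.1.2

theorem ptrMid_pureProj_mulVecMid [Fintype B'] [DecidableEq B] {U : Matrix B' B ℂ}
    (hU : Uᴴ * U = 1) (ψ : (A × B) × C → ℂ) :
    ptrMid (pureProj (mulVecMid U ψ)) = ptrMid (pureProj ψ) := by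
  ext ⟨a, c⟩ ⟨a', c'⟩
  exact mulVec_dotProduct_star_mulVec hU (fun b => ψ ((a, b), c)) (fun b => ψ ((a', b), c'))

theorem one_kronecker_mul_mul_conjTranspose_apply [Fintype A] [DecidableEq A]
    (U : Matrix B' B ℂ) (M : Matrix (A × B) (A × B) ℂ) (a a' : A) (k k' : B') :
    (((1 : Matrix A A ℂ) ⊗ₖ U) * M * ((1 : Matrix A A ℂ) ⊗ₖ U)ᴴ) (a, k) (a', k') =
      ∑ p, ∑ q, U k p * M (a, p) (a', q) * star (U k' q) := by
  simp only [mul_apply, kroneckerMap_apply, one_apply, ite_mul, one_mul, zero_mul,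
    Fintype.sum_prod_type, Finset.sum_ite_irrel, Finset.sum_const_zero, Finset.sum_ite_eq,
    Finset.mem_univ, ↓reduceIte, conjTranspose_apply, RCLike.star_def,
    apply_ite (starRingEnd ℂ), map_zero, mul_ite, Finset.sum_mul, mul_zero]
  exact Finset.sum_comm

theorem ptrR_pureProj_mulVecMid [Fintype A] [DecidableEq A] [Fintype C] (U : Matrix B' B ℂ)
    (ψ : (A × B) × C → ℂ) :
    ptrR (pureProj (mulVecMid U ψ)) =
      ((1 : Matrix A A ℂ) ⊗ₖ U) * ptrR (pureProj ψ) * ((1 : Matrix A A ℂ) ⊗ₖ U)ᴴ := by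
  ext ⟨a, k⟩ ⟨a', k'⟩
  rw [one_kronecker_mul_mul_conjTranspose_apply]
  simp only [ptrR, pureProj, mulVecMid, mulVec, dotProduct, star_sum, star_mul',
    RCLike.star_def, Finset.mul_sum, Finset.sum_mul]
  rw [Finset.sum_comm, Finset.sum_congr rfl fun _ _ => Finset.sum_comm, Finset.sum_comm]
  exact Finset.sum_congr rfl fun _ _ => Finset.sum_congr rfl fun _ _ =>
    Finset.sum_congr rfl fun _ _ => by ring

end MulVecMid

theorem ptrR_pureProj_regroup {A B C E : Type*} [Fintype C] [Fintype E]
    (ψ : (A × (B × C)) × E → ℂ) :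
    ptrR (pureProj fun x : (A × B) × (C × E) => ψ ((x.1.1, (x.1.2, x.2.1)), x.2.2)) =
      ptrR (reindex (Equiv.prodAssoc A B C).symm (Equiv.prodAssoc A B C).symm
        (ptrR (pureProj ψ))) := by
  ext i j
  simp [ptrR, pureProj, Fintype.sum_prod_type]

theorem ptrMid_pureProj_eq_kronecker {A B₁ B₂ C : Type*} [Fintype B₁] [Fintype B₂]
    {ψ : (A × (B₁ × B₂)) × C → ℂ} {φ : A × B₁ → ℂ} {χ : B₂ × C → ℂ}
    (h : ∀ a b₁ b₂ c, ψ ((a, (b₁, b₂)), c) = φ (a, b₁) * χ (b₂, c)) :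
    ptrMid (pureProj ψ) = ptrR (pureProj φ) ⊗ₖ ptrL (pureProj χ) := by
  ext ⟨a, c⟩ ⟨a', c'⟩
  simp only [ptrMid, pureProj, h, star_mul', RCLike.star_def, Fintype.sum_prod_type,
    kroneckerMap_apply, ptrR, ptrL, Finset.sum_mul_sum]
  exact Finset.sum_congr rfl fun _ _ => Finset.sum_congr rfl fun _ _ => by ring

theorem stmt_3_general {AB P R C D : Type*} [Fintype AB] [DecidableEq AB] [Fintype P] [DecidableEq P]
    [Fintype R] [Fintype C] [Fintype D]
    (ρ : Matrix (AB × P) (AB × P) ℂ) (hρ : IsDensity ρ)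
    (U : Matrix (C × D) P ℂ) (hU : Uᴴ * U = 1)
    (φ : AB × C → ℂ) (hφ : ∑ i, ‖φ i‖ ^ 2 = 1)
    (ρD : Matrix D D ℂ) (hD : IsDensity ρD)
    (hiso : Matrix.reindex (Equiv.prodAssoc AB C D).symm (Equiv.prodAssoc AB C D).symm
        (((1 : Matrix AB AB ℂ) ⊗ₖ U) * ρ * ((1 : Matrix AB AB ℂ) ⊗ₖ U)ᴴ)
      = pureProj φ ⊗ₖ ρD)
    (ψ : (AB × P) × R → ℂ) (hpur : ptrR (pureProj ψ) = ρ) :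
    ptrMid (pureProj ψ) = ptrR (ptrMid (pureProj ψ)) ⊗ₖ ptrL (ptrMid (pureProj ψ)) := by
  set ψ' := mulVecMid U ψ
  have hmarg :
      ptrR (pureProj fun x : (AB × C) × (D × R) => ψ' ((x.1.1, (x.1.2, x.2.1)), x.2.2)) =
        pureProj φ := by
    rw [ptrR_pureProj_regroup, ptrR_pureProj_mulVecMid, hpur, hiso, ptrR_kronecker, hD.2,
      one_smul]
  obtain ⟨χ, hχ⟩ : ∃ χ : D × R → ℂ, ∀ a c d r, ψ' ((a, (c, d)), r) = φ (a, c) * χ (d, r) :=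
    ⟨fun y => ∑ x, star (φ x) * ψ' ((x.1, (x.2, y.1)), y.2), fun a c d r =>
      eq_mul_of_ptrR_pureProj_eq (star_dotProduct_self_eq_one_of_sum_norm_sq hφ) hmarg
        (a, c) (d, r)⟩
  have hprod : ptrMid (pureProj ψ) = ptrR (pureProj φ) ⊗ₖ ptrL (pureProj χ) := by
    rw [← ptrMid_pureProj_mulVecMid hU]
    exact ptrMid_pureProj_eq_kronecker hχ
  refine eq_ptrR_kronecker_ptrL_of_eq_kronecker hprod ?_
  rw [trace_ptrMid, ← trace_ptrR, hpur, hρ.2]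

/-- conversely, if there is an isometry U : A'B' → CD with
(1 ⊗ U) ρ (1 ⊗ U)† = ψ_{ABC} ⊗ ρ_D (ψ_{ABC} pure), then for any purification ψ of
ρ_{ABA'B'}, the reduced state on AB,R is product. -/
theorem stmt_3 {AB P R C D : Type*} [Fintype AB] [DecidableEq AB] [Fintype P] [DecidableEq P]
    [Fintype R] [DecidableEq R] [Fintype C] [DecidableEq C] [Fintype D] [DecidableEq D]
    (ρ : Matrix (AB × P) (AB × P) ℂ) (hρ : IsDensity ρ)
    (U : Matrix (C × D) P ℂ) (hU : Uᴴ * U = 1)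
    (φ : AB × C → ℂ) (hφ : ∑ i, ‖φ i‖ ^ 2 = 1)
    (ρD : Matrix D D ℂ) (hD : IsDensity ρD)
    (hiso : Matrix.reindex (Equiv.prodAssoc AB C D).symm (Equiv.prodAssoc AB C D).symm
        (((1 : Matrix AB AB ℂ) ⊗ₖ U) * ρ * ((1 : Matrix AB AB ℂ) ⊗ₖ U)ᴴ)
      = pureProj φ ⊗ₖ ρD)
    (ψ : (AB × P) × R → ℂ) (hpur : ptrR (pureProj ψ) = ρ) :
    ptrMid (pureProj ψ) = ptrR (ptrMid (pureProj ψ)) ⊗ₖ ptrL (ptrMid (pureProj ψ)) :=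
  stmt_3_general ρ hρ U hU φ hφ ρD hD hiso ψ hpur
end
end

section
/- The logarithmic negativity of the isotropic state ρ_iso(F,d) = F Φ_d + (1−F)(1−Φ_d)/(d²−1) on C^d ⊗ C^d satisfies E_N(ρ_iso(F,d)) = log(F d) whenever F ≥ 1/d. -/
open Classical Matrix Kronecker ComplexOrder
noncomputable section

/-- Trace norm ‖M‖₁ = Tr √(M†M). -/
def trNorm {n : Type*} [Fintype n] [DecidableEq n] (M : Matrix n n ℂ) : ℝ :=
  (((Matrix.posSemidef_conjTranspose_mul_self M).1.eigenvectorUnitary.1 *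
      Matrix.diagonal (((↑) : ℝ → ℂ) ∘ (Real.sqrt ·) ∘ (Matrix.posSemidef_conjTranspose_mul_self M).1.eigenvalues) *
      (star (Matrix.posSemidef_conjTranspose_mul_self M).1.eigenvectorUnitary : Matrix n n ℂ)).trace).re

/-- Partial transpose on the second tensor factor. -/
def ptB {A B : Type*} (ρ : Matrix (A × B) (A × B) ℂ) : Matrix (A × B) (A × B) ℂ :=
  fun p q => ρ (p.1, q.2) (q.1, p.2)

/-! The partial transpose maps `Φ_d` to `S / d`, where `S` is the swap operator, so
`ρ^Γ = c • 1 + a • S` with `c = (1 - F) / (d² - 1)` and `a = (F - c) / d`. As `S` is a Hermitian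
involution, `ρ^Γ = S (a • 1 + c • S)`, and `F ≥ 1 / d` gives `|c| ≤ a`, so that `a • 1 + c • S` is
positive semidefinite. This is the polar decomposition of `ρ^Γ`, hence
`‖ρ^Γ‖₁ = tr (a • 1 + c • S) = a d² + c d = F d`. -/

section
variable {n : Type*} [Fintype n] [DecidableEq n]

lemma trNorm_eq_re_trace_of_conjTranspose_mul_self_eq {M R : Matrix n n ℂ} (hR : R.PosSemidef)
    (hMR : Mᴴ * M = R * R) : trNorm M = R.trace.re := by
  have hsqrt : (posSemidef_conjTranspose_mul_self M).1.cfc Real.sqrt = R := by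
    have : IsSelfAdjoint R := hR.1
    rw [← IsHermitian.cfc_eq, hMR, ← pow_two, ← cfc_pow_id (R := ℝ) R 2,
      ← cfc_comp Real.sqrt (fun x : ℝ => x ^ 2) R]
    conv_rhs => rw [← cfc_id' ℝ R]
    refine cfc_congr fun x hx => Real.sqrt_sq ?_
    obtain ⟨i, rfl⟩ := hR.1.spectrum_real_eq_range_eigenvalues ▸ hx
    exact hR.eigenvalues_nonneg i
  rw [trNorm, ← hsqrt, IsHermitian.cfc, Unitary.conjStarAlgAut_apply]
  rfl

lemma trNorm_mul_of_conjTranspose_mul_self_eq_one {U R : Matrix n n ℂ} (hU : Uᴴ * U = 1)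
    (hR : R.PosSemidef) : trNorm (U * R) = R.trace.re := by
  refine trNorm_eq_re_trace_of_conjTranspose_mul_self_eq hR ?_
  rw [conjTranspose_mul, hR.1.eq, Matrix.mul_assoc, ← Matrix.mul_assoc Uᴴ, hU, Matrix.one_mul]

lemma posSemidef_one_add_of_mul_self_eq_one {S : Matrix n n ℂ} (hS : S.IsHermitian)
    (hSS : S * S = 1) : (1 + S).PosSemidef := by
  have h : (1 + S)ᴴ * (1 + S) = (2 : ℂ) • (1 + S) := by
    rw [conjTranspose_add, conjTranspose_one, hS.eq, add_mul, mul_add, mul_add, hSS,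
      Matrix.one_mul, Matrix.one_mul, Matrix.mul_one]
    module
  have := (posSemidef_conjTranspose_mul_self (1 + S)).smul
    (Complex.zero_le_real.mpr (by norm_num : (0 : ℝ) ≤ 1 / 2))
  rwa [h, smul_smul, Complex.ofReal_div, Complex.ofReal_one, Complex.ofReal_ofNat,
    one_div_mul_cancel two_ne_zero, one_smul] at this

lemma posSemidef_smul_one_add_smul_of_mul_self_eq_one {S : Matrix n n ℂ} (hS : S.IsHermitian)
    (hSS : S * S = 1) {a c : ℝ} (hca : |c| ≤ a) : ((a : ℂ) • 1 + (c : ℂ) • S).PosSemidef := by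
  obtain ⟨hac, hca⟩ := abs_le.mp hca
  have hplus := posSemidef_one_add_of_mul_self_eq_one hS hSS
  have hminus := posSemidef_one_add_of_mul_self_eq_one hS.neg (by rw [neg_mul_neg, hSS])
  have key : (a : ℂ) • 1 + (c : ℂ) • S
      = (((a + c) / 2 : ℝ) : ℂ) • (1 + S) + (((a - c) / 2 : ℝ) : ℂ) • (1 + -S) := by
    push_cast; module
  rw [key]
  exact (hplus.smul (Complex.zero_le_real.mpr (by linarith))).add
    (hminus.smul (Complex.zero_le_real.mpr (by linarith)))

end

def swapMatrix (n : Type*) [DecidableEq n] : Matrix (n × n) (n × n) ℂ :=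
  Equiv.Perm.permMatrix ℂ (Equiv.prodComm n n)

section
variable {n : Type*} [DecidableEq n]

lemma swapMatrix_apply (p q : n × n) : swapMatrix n p q = if q = p.swap then 1 else 0 := by
  simp [swapMatrix, PEquiv.toMatrix_apply, eq_comm]

lemma conjTranspose_swapMatrix : (swapMatrix n)ᴴ = swapMatrix n := by
  rw [swapMatrix, conjTranspose_permMatrix]
  rfl

lemma swapMatrix_mul_self [Fintype n] : swapMatrix n * swapMatrix n = 1 := by
  rw [swapMatrix, ← permMatrix_mul]
  convert permMatrix_one
  ext p <;> rfl

lemma trace_swapMatrix [Fintype n] : (swapMatrix n).trace = Fintype.card n := by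
  rw [Matrix.trace, Fintype.sum_prod_type]
  simp [swapMatrix_apply, Prod.ext_iff, eq_comm]

end

section
variable {A B : Type*}

lemma ptB_add (ρ σ : Matrix (A × B) (A × B) ℂ) : ptB (ρ + σ) = ptB ρ + ptB σ := rfl

lemma ptB_sub (ρ σ : Matrix (A × B) (A × B) ℂ) : ptB (ρ - σ) = ptB ρ - ptB σ := rfl

lemma ptB_smul (z : ℂ) (ρ : Matrix (A × B) (A × B) ℂ) : ptB (z • ρ) = z • ptB ρ := rfl

lemma ptB_one [DecidableEq A] [DecidableEq B] : ptB (1 : Matrix (A × B) (A × B) ℂ) = 1 := by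
  ext p q
  simp [ptB, one_apply, Prod.ext_iff, eq_comm]

end

lemma ptB_maxEntangled {n : Type*} [DecidableEq n] (z : ℂ) :
    ptB (fun p q : n × n => if p.1 = p.2 ∧ q.1 = q.2 then z else 0) = z • swapMatrix n := by
  ext p q
  simp [ptB, swapMatrix_apply, Prod.ext_iff, eq_comm, and_comm]

lemma trNorm_smul_one_add_smul_swapMatrix {n : Type*} [Fintype n] [DecidableEq n] {a c : ℝ}
    (hca : |c| ≤ a) :
    trNorm ((c : ℂ) • 1 + (a : ℂ) • swapMatrix n) = a * Fintype.card n ^ 2 + c * Fintype.card n := by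
  have hpolar : (c : ℂ) • 1 + (a : ℂ) • swapMatrix n
      = swapMatrix n * ((a : ℂ) • 1 + (c : ℂ) • swapMatrix n) := by
    rw [mul_add, mul_smul_comm, mul_smul_comm, Matrix.mul_one, swapMatrix_mul_self, add_comm]
  rw [hpolar, trNorm_mul_of_conjTranspose_mul_self_eq_one
    (by rw [conjTranspose_swapMatrix, swapMatrix_mul_self])
    (posSemidef_smul_one_add_smul_of_mul_self_eq_one
      conjTranspose_swapMatrix swapMatrix_mul_self hca)]
  simp [trace_swapMatrix, sq]

theorem stmt_9_general {d : ℕ} (hd : 2 ≤ d) (F : ℝ) (hF1 : 1 / (d : ℝ) ≤ F)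
    (Φ : Matrix (Fin d × Fin d) (Fin d × Fin d) ℂ)
    (hΦ : Φ = fun p q => if p.1 = p.2 ∧ q.1 = q.2 then (1 / (d : ℂ)) else 0)
    (ρ : Matrix (Fin d × Fin d) (Fin d × Fin d) ℂ)
    (hρ : ρ = (F : ℂ) • Φ + ((1 - (F : ℂ)) / ((d : ℂ) ^ 2 - 1)) • (1 - Φ)) :
    Real.logb 2 (trNorm (ptB ρ)) = Real.logb 2 (F * d) := by
  have hdR : (2 : ℝ) ≤ d := by exact_mod_cast hd
  have hd0 : (d : ℝ) ≠ 0 := by positivity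
  have hd1 : (d : ℝ) - 1 ≠ 0 := by linarith
  have hd2 : (d : ℝ) ^ 2 - 1 ≠ 0 := by nlinarith
  have hFd : 1 ≤ F * d := by rwa [div_le_iff₀ (by positivity)] at hF1
  set c : ℝ := (1 - F) / ((d : ℝ) ^ 2 - 1) with hc
  set a : ℝ := (F - c) / d with ha
  have hpt : ptB ρ = (c : ℂ) • 1 + (a : ℂ) • swapMatrix (Fin d) := by
    rw [hρ, ptB_add, ptB_smul, ptB_smul, ptB_sub, ptB_one, hΦ, ptB_maxEntangled, ha, hc]
    push_cast
    module
  have hsub : a - c = (F * d - 1) / (d * (d - 1)) := by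
    rw [ha, hc]; field_simp; ring
  have hadd : a + c = (F * d + 1) / (d * (d + 1)) := by
    rw [ha, hc]; field_simp; ring
  have hca : |c| ≤ a := by
    have : 0 ≤ a - c := hsub ▸ div_nonneg (by linarith) (by nlinarith)
    have : 0 ≤ a + c := hadd ▸ div_nonneg (by linarith) (by positivity)
    exact abs_le.mpr ⟨by linarith, by linarith⟩
  rw [hpt, trNorm_smul_one_add_smul_swapMatrix hca, Fintype.card_fin, ha]
  congr 1
  field_simp
  ring

/-- the logarithmic negativity of the isotropic state
ρ_iso(F,d) = F Φ_d + (1−F)(1−Φ_d)/(d²−1) equals log₂(F d) for F ≥ 1/d. -/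
theorem stmt_9 {d : ℕ} (hd : 2 ≤ d) (F : ℝ) (hF1 : 1 / (d : ℝ) ≤ F) (hF2 : F ≤ 1)
    (Φ : Matrix (Fin d × Fin d) (Fin d × Fin d) ℂ)
    (hΦ : Φ = fun p q => if p.1 = p.2 ∧ q.1 = q.2 then (1 / (d : ℂ)) else 0)
    (ρ : Matrix (Fin d × Fin d) (Fin d × Fin d) ℂ)
    (hρ : ρ = (F : ℂ) • Φ + ((1 - (F : ℂ)) / ((d : ℂ) ^ 2 - 1)) • (1 - Φ)) :
    Real.logb 2 (trNorm (ptB ρ)) = Real.logb 2 (F * d) :=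
  stmt_9_general hd F hF1 Φ hΦ ρ hρ
end
end

section
/- Suppose Z = (X,Y), i.e. the reference holds a copy of the senders' data. Then any decomposition P_{XY|Z=z}(xy) = q(ℓ|z) P_{J|Z=z,L=ℓ}(j) P_{K|L=ℓ}(k) (under a bijection τ(x,y)=(j,k) ∈ J_ℓ×K_ℓ) in which the K-part is nondegenerate forces each K_ℓ to be a singleton; consequently H(LJ) = H(XY). -/
open Classical
noncomputable section

/-!
Since `Z = (X, Y)`, each decomposed distribution is a point mass `δ_z`, so every triple
`(ℓ, j, k)` of positive weight `q(ℓ|z) P_J(j) P_K(k)` is `τ z`. Fix `ℓ` and `z` with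
`q(ℓ|z) > 0` and some `j` with `P_J(j) > 0`; as `P_K` is positive on all of `K_ℓ`, every `(ℓ, j, k)`
is `τ z`, and injectivity of `τ⁻¹` makes `K_ℓ` a singleton. Summing out a variable ranging over a
singleton does not change the entropy.
-/

open Real

theorem Fintype.map_sum_of_subsingleton {ι M N : Type*} [Fintype ι] [Subsingleton ι]
    [AddCommMonoid M] [AddCommMonoid N] (f : M → N) (hf : f 0 = 0) (g : ι → M) :
    f (∑ i, g i) = ∑ i, f (g i) := by
  cases isEmpty_or_nonempty ι with
  | inl _ => simp [hf]
  | inr h =>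
    obtain ⟨i⟩ := h
    rw [Fintype.sum_subsingleton _ i, Fintype.sum_subsingleton _ i]

theorem sum_negMulLog_marginal_of_subsingleton {L : Type*} [Fintype L] {J K : L → Type*}
    [∀ l, Fintype (J l)] [∀ l, Fintype (K l)] [∀ l, Subsingleton (K l)]
    (p : (Σ l, J l × K l) → ℝ) :
    ∑ s : Σ l, J l, negMulLog (∑ k, p ⟨s.1, (s.2, k)⟩) = ∑ t, negMulLog (p t) := by
  simp only [Fintype.sum_sigma, Fintype.sum_prod_type,
    Fintype.map_sum_of_subsingleton negMulLog negMulLog_zero]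

theorem subsingleton_of_decomposition_delta {S L : Type*} [DecidableEq S] {J K : L → Type*}
    [∀ l, Fintype (J l)] (τ : S ≃ Σ l, J l × K l)
    (q : L → S → ℝ) (PJ : S → (l : L) → J l → ℝ) (PK : (l : L) → K l → ℝ)
    (hdec : ∀ z s : S, (if s = z then (1 : ℝ) else 0)
        = q (τ s).1 z * PJ z (τ s).1 (τ s).2.1 * PK (τ s).1 (τ s).2.2)
    {l : L} {z : S} (hPJ0 : ∀ j, 0 ≤ PJ z l j) (hPJ1 : ∑ j, PJ z l j = 1)
    (hq : 0 < q l z) (hPK : ∀ k, 0 < PK l k) : Subsingleton (K l) := by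
  obtain ⟨j, -, hj⟩ := Finset.exists_ne_zero_of_sum_ne_zero (hPJ1 ▸ one_ne_zero)
  have hmass : ∀ k, τ.symm ⟨l, (j, k)⟩ = z := by
    intro k
    by_contra hne
    have h := hdec z (τ.symm ⟨l, (j, k)⟩)
    rw [if_neg hne, Equiv.apply_symm_apply] at h
    exact (mul_pos (mul_pos hq ((hPJ0 j).lt_of_ne' hj)) (hPK k)).ne' h.symm
  refine ⟨fun k k' => ?_⟩
  simpa using τ.symm.injective ((hmass k).trans (hmass k').symm)

theorem stmt_14_general {X Y L : Type*} [Fintype X] [DecidableEq X] [Fintype Y] [DecidableEq Y]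
    [Fintype L] (Jf Kf : L → Type*) [∀ l, Fintype (Jf l)] [∀ l, Fintype (Kf l)]
    (τ : (X × Y) ≃ (Σ l : L, Jf l × Kf l))
    (P : X × Y → ℝ)
    (q : L → X × Y → ℝ) (PJ : X × Y → (l : L) → Jf l → ℝ) (PK : (l : L) → Kf l → ℝ)
    (hPJ0 : ∀ z l j, 0 ≤ PJ z l j) (hPJ1 : ∀ z l, ∑ j, PJ z l j = 1)
    -- the decomposition of the δ-distributions P_{XY|Z=z} = δ_z
    (hdec : ∀ z s : X × Y, (if s = z then (1 : ℝ) else 0)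
        = q (τ s).1 z * PJ z (τ s).1 (τ s).2.1 * PK (τ s).1 (τ s).2.2)
    -- nondegeneracy of the K-part
    (hnd : ∀ l, (∃ z, 0 < q l z) ∧ ∀ k : Kf l, 0 < PK l k) :
    (∀ l, ∀ k k' : Kf l, k = k')
    ∧ (∑ s : Σ l : L, Jf l, Real.negMulLog (∑ k, P (τ.symm ⟨s.1, (s.2, k)⟩)))
        = ∑ s, Real.negMulLog (P s) := by
  have hsub : ∀ l, Subsingleton (Kf l) := fun l =>
    have ⟨⟨z, hz⟩, hPK⟩ := hnd l
    subsingleton_of_decomposition_delta τ q PJ PK hdec (hPJ0 z l) (hPJ1 z l) hz hPK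
  refine ⟨fun l => (hsub l).elim, ?_⟩
  rw [sum_negMulLog_marginal_of_subsingleton fun t => P (τ.symm t)]
  exact τ.symm.sum_comp (negMulLog ∘ P)

/-- if Z = (X,Y), then in any Koashi–Imoto style decomposition
P_{XY|Z=z}(xy) = q(ℓ|z) P_{J|Z=z,L=ℓ}(j) P_{K|L=ℓ}(k) (under a bijection
τ(x,y) = (ℓ,j,k)) with nondegenerate K-part, every K_ℓ is a singleton;
consequently H(LJ) = H(XY). -/
theorem stmt_14 {X Y L : Type*} [Fintype X] [DecidableEq X] [Fintype Y] [DecidableEq Y]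
    [Fintype L] (Jf Kf : L → Type*) [∀ l, Fintype (Jf l)] [∀ l, Fintype (Kf l)]
    (τ : (X × Y) ≃ (Σ l : L, Jf l × Kf l))
    (P : X × Y → ℝ) (hP0 : ∀ s, 0 ≤ P s) (hP1 : ∑ s, P s = 1)
    (q : L → X × Y → ℝ) (PJ : X × Y → (l : L) → Jf l → ℝ) (PK : (l : L) → Kf l → ℝ)
    (hq0 : ∀ l z, 0 ≤ q l z) (hq1 : ∀ z, ∑ l, q l z = 1)
    (hPJ0 : ∀ z l j, 0 ≤ PJ z l j) (hPJ1 : ∀ z l, ∑ j, PJ z l j = 1)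
    (hPK0 : ∀ l k, 0 ≤ PK l k) (hPK1 : ∀ l, ∑ k, PK l k = 1)
    -- the decomposition of the δ-distributions P_{XY|Z=z} = δ_z
    (hdec : ∀ z s : X × Y, (if s = z then (1 : ℝ) else 0)
        = q (τ s).1 z * PJ z (τ s).1 (τ s).2.1 * PK (τ s).1 (τ s).2.2)
    -- nondegeneracy of the K-part
    (hnd : ∀ l, (∃ z, 0 < q l z) ∧ ∀ k : Kf l, 0 < PK l k) :
    (∀ l, ∀ k k' : Kf l, k = k')
    ∧ (∑ s : Σ l : L, Jf l, Real.negMulLog (∑ k, P (τ.symm ⟨s.1, (s.2, k)⟩)))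
        = ∑ s, Real.negMulLog (P s) :=
  stmt_14_general Jf Kf τ P q PJ PK hPJ0 hPJ1 hdec hnd
end
end
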